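/- arXiv:1508.05206 — 2 statements merged into one kernel-verified Lean document; each statement's English description precedes it below -/
import Mathlib

section
/- For all real numbers a, b, every real r ≥ 2, and every k > 0, one has (a - b)(a·min(|a|,k)^{r-2} - b·min(|b|,k)^{r-2}) ≥ (4(r-1)/r²)·(a·min(|a|,k)^{r/2-1} - b·min(|b|,k)^{r/2-1})². -/
/-!
Write `F_p(t) = t |t|_k^(p-1)`, so that the inequality compares increments of `F_{r-1}` and
`F_{r/2}`. Away from `t = 0, ±k` both are differentiable, and with `c = 4(r-1)/r²` their
derivatives satisfy `c F_{r/2}'² ≤ F_{r-1}'`: with equality where `|t| < k`, and because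
`c ≤ 1` where `|t| > k`. Writing the increments as integrals of the derivatives,
Cauchy–Schwarz gives `c (F_{r/2}(a) - F_{r/2}(b))² ≤ (a - b) ∫_b^a c F_{r/2}'² ≤
(a - b) (F_{r-1}(a) - F_{r-1}(b))`.
-/

open Set MeasureTheory intervalIntegral

theorem mul_sq_integral_le_of_mul_sq_le {f g : ℝ → ℝ} {a b c : ℝ} (hab : a ≤ b) (hc : 0 ≤ c)
    (hf : IntervalIntegrable f volume a b) (hg : IntervalIntegrable g volume a b)
    (hfg : ∀ x ∈ Icc a b, c * g x ^ 2 ≤ f x) :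
    c * (∫ x in a..b, g x) ^ 2 ≤ (b - a) * ∫ x in a..b, f x := by
  obtain rfl | hlt := hab.eq_or_lt
  · simp
  have hL : 0 < b - a := sub_pos.2 hlt
  set m := (∫ x in a..b, g x) / (b - a) with hm
  -- tangent-line bound `g² ≥ 2 m g - m²` at the mean value `m` of `g`
  have hmono : ∫ x in a..b, c * (2 * m * g x - m ^ 2) ≤ ∫ x in a..b, f x := by
    refine integral_mono_on hab ((hg.const_mul _).sub intervalIntegrable_const |>.const_mul c) hf
      fun x hx => le_trans ?_ (hfg x hx)
    nlinarith [mul_nonneg hc (sq_nonneg (g x - m))]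
  rw [intervalIntegral.integral_const_mul, integral_sub (hg.const_mul _) intervalIntegrable_const,
    intervalIntegral.integral_const_mul, intervalIntegral.integral_const, smul_eq_mul] at hmono
  have hI : ∫ x in a..b, g x = m * (b - a) := by rw [hm, div_mul_cancel₀ _ hL.ne']
  rw [hI] at hmono ⊢
  nlinarith

noncomputable def truncPow (k p t : ℝ) : ℝ := t * min |t| k ^ (p - 1)

noncomputable def truncPowDeriv (k p t : ℝ) : ℝ := (if |t| < k then p else 1) * min |t| k ^ (p - 1)

section
variable {k p : ℝ}

theorem continuous_truncPow (hp : 1 ≤ p) : Continuous (truncPow k p) :=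
  continuous_id.mul <| (continuous_abs.min continuous_const).rpow_const fun _ => Or.inr (by linarith)

theorem hasDerivAt_truncPow {t : ℝ} (ht : t ≠ 0) (htk : |t| ≠ k) :
    HasDerivAt (truncPow k p) (truncPowDeriv k p t) t := by
  rcases htk.lt_or_gt with htk | htk
  · have heq : truncPow k p =ᶠ[nhds t] fun s => s * |s| ^ (p - 1) := by
      filter_upwards [continuous_abs.continuousAt.eventually_lt continuousAt_const htk] with s hs
      rw [truncPow, min_eq_left hs.le]
    have hsign : t * SignType.sign t = |t| := by
      rcases ht.lt_or_gt with h | h <;> simp [h, abs_of_neg, abs_of_pos]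
    have hd : HasDerivAt (fun s => s * |s| ^ (p - 1)) (p * |t| ^ (p - 1)) t := by
      refine ((hasDerivAt_id' t).mul ((hasDerivAt_abs ht).rpow_const (p := p - 1)
        (Or.inl (abs_ne_zero.2 ht)))).congr_deriv ?_
      have hpow : |t| ^ (p - 1 - 1) * |t| = |t| ^ (p - 1) := by
        rw [← Real.rpow_add_one (abs_ne_zero.2 ht), sub_add_cancel]
      linear_combination (p - 1) * |t| ^ (p - 1 - 1) * hsign + (p - 1) * hpow
    rw [truncPowDeriv, if_pos htk, min_eq_left htk.le]
    exact hd.congr_of_eventuallyEq heq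
  · have heq : truncPow k p =ᶠ[nhds t] fun s => s * k ^ (p - 1) := by
      filter_upwards [continuousAt_const.eventually_lt continuous_abs.continuousAt htk] with s hs
      rw [truncPow, min_eq_right hs.le]
    rw [truncPowDeriv, if_neg htk.not_gt, min_eq_right htk.le, one_mul]
    simpa using ((hasDerivAt_id t).mul_const (k ^ (p - 1))).congr_of_eventuallyEq heq

theorem intervalIntegrable_truncPowDeriv (hk : 0 ≤ k) (hp : 1 ≤ p) (a b : ℝ) :
    IntervalIntegrable (truncPowDeriv k p) volume a b := by
  refine intervalIntegrable_const (c := p * k ^ (p - 1)) |>.mono_fun' ?_ <|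
    Filter.Eventually.of_forall fun t => ?_
  · exact ((Measurable.ite (measurableSet_lt continuous_abs.measurable measurable_const)
      measurable_const measurable_const).mul
      ((continuous_abs.min continuous_const).rpow_const fun _ => Or.inr (by linarith)).measurable
      ).aestronglyMeasurable
  · have hm : 0 ≤ min |t| k := le_min (abs_nonneg t) hk
    have hcoef : 0 ≤ (if |t| < k then p else 1) ∧ (if |t| < k then p else 1) ≤ p := by
      split_ifs <;> constructor <;> linarith
    simp only [Real.norm_eq_abs, truncPowDeriv]
    rw [abs_of_nonneg (mul_nonneg hcoef.1 (Real.rpow_nonneg hm _))]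
    exact mul_le_mul hcoef.2 (Real.rpow_le_rpow hm (min_le_right _ _) (sub_nonneg.2 hp))
      (Real.rpow_nonneg hm _) (by linarith)

theorem mul_sq_truncPowDeriv_le {r : ℝ} (hk : 0 ≤ k) (hr : r ≠ 0) (t : ℝ) :
    4 * (r - 1) / r ^ 2 * truncPowDeriv k (r / 2) t ^ 2 ≤ truncPowDeriv k (r - 1) t := by
  have hm : 0 ≤ min |t| k := le_min (abs_nonneg t) hk
  have hsq : (min |t| k ^ (r / 2 - 1)) ^ 2 = min |t| k ^ (r - 1 - 1) := by
    rw [← Real.rpow_mul_natCast hm]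
    ring_nf
  rw [truncPowDeriv, truncPowDeriv, mul_pow, hsq]
  split_ifs
  · refine le_of_eq ?_
    field_simp
    ring
  · have hc : 4 * (r - 1) / r ^ 2 ≤ 1 := by
      rw [div_le_one (by positivity)]
      nlinarith [sq_nonneg (r - 2)]
    nlinarith [Real.rpow_nonneg hm (r - 1 - 1)]

theorem mul_sq_truncPow_sub_le {r a b : ℝ} (hk : 0 ≤ k) (hr : 2 ≤ r) (hab : a ≤ b) :
    4 * (r - 1) / r ^ 2 * (truncPow k (r / 2) b - truncPow k (r / 2) a) ^ 2 ≤
      (b - a) * (truncPow k (r - 1) b - truncPow k (r - 1) a) := by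
  have hkinks : ({-k, 0, k} : Set ℝ).Countable := (Set.toFinite _).countable
  have hderiv (p : ℝ) (x : ℝ) (hx : x ∈ Ioo a b \ {-k, 0, k}) :
      HasDerivAt (truncPow k p) (truncPowDeriv k p x) x := by
    simp only [mem_sdiff, mem_insert_iff, mem_singleton_iff, not_or] at hx
    refine hasDerivAt_truncPow hx.2.2.1 fun h => ?_
    rcases (abs_eq hk).1 h with h | h
    exacts [hx.2.2.2 h, hx.2.1 h]
  have hftc (p : ℝ) (hp : 1 ≤ p) :
      ∫ x in a..b, truncPowDeriv k p x = truncPow k p b - truncPow k p a :=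
    integral_eq_of_hasDerivAt_off_countable_of_le _ _ hab hkinks
      (continuous_truncPow hp).continuousOn (hderiv p) (intervalIntegrable_truncPowDeriv hk hp a b)
  rw [← hftc (r / 2) (by linarith), ← hftc (r - 1) (by linarith)]
  exact mul_sq_integral_le_of_mul_sq_le hab (div_nonneg (by linarith) (sq_nonneg r))
    (intervalIntegrable_truncPowDeriv hk (by linarith) a b)
    (intervalIntegrable_truncPowDeriv hk (by linarith) a b)
    fun x _ => mul_sq_truncPowDeriv_le hk (by positivity) x

end

theorem stmt_0 (a b r k : ℝ) (hr : 2 ≤ r) (hk : 0 < k) :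
    (a - b) * (a * (min |a| k) ^ (r - 2) - b * (min |b| k) ^ (r - 2)) ≥
      (4 * (r - 1) / r ^ 2) *
        (a * (min |a| k) ^ (r / 2 - 1) - b * (min |b| k) ^ (r / 2 - 1)) ^ 2 := by
  rw [show r - 2 = r - 1 - 1 by ring]
  change (a - b) * (truncPow k (r - 1) a - truncPow k (r - 1) b) ≥
    4 * (r - 1) / r ^ 2 * (truncPow k (r / 2) a - truncPow k (r / 2) b) ^ 2
  rcases le_total b a with hba | hab
  · exact mul_sq_truncPow_sub_le hk.le hr hba
  · linear_combination mul_sq_truncPow_sub_le hk.le hr hab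
end

section
/- Let m > 2, γ := √(m/2), C > 0, and let (Tₙ) be a sequence of reals with Tₙ ≥ 1 satisfying T_{n+1} ≤ (1 + C)^{1/r_{n+1}} · r_{n+1}^{1/r_{n+1}} · Tₙ^{γ² rₙ / r_{n+1}} for all n, where r₀ = m + 1 and r_{n+1} = γ² rₙ − m + 2. Then (Tₙ) is bounded above. -/
/-!
Taking logarithms, `xₙ := rₙ log Tₙ` satisfies `xₙ₊₁ ≤ γ² xₙ + log (1 + C) + log rₙ₊₁`, and since
`rₙ = (m - 1) γ²ⁿ + 2` the additive term grows only linearly in `n`. Hence `xₙ = O(γ²ⁿ) = O(rₙ)`,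
so `log Tₙ` stays bounded.
-/

open Real

/-- The shift `E + F n` with `(q - 1) F = b`, `(q - 1) E = a + F` absorbs the inhomogeneity,
turning the recursion into `yₙ₊₁ ≤ q yₙ`. -/
theorem exists_le_mul_pow_of_le_mul_add_linear {q a b : ℝ} (hq : 1 < q) (ha : 0 ≤ a) (hb : 0 ≤ b)
    {x : ℕ → ℝ} (h : ∀ n : ℕ, x (n + 1) ≤ q * x n + a + b * n) :
    ∃ K, ∀ n, x n ≤ K * q ^ n := by
  have hq1 : 0 < q - 1 := by linarith
  set F := b / (q - 1)
  set E := (a + F) / (q - 1)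
  have hFnonneg : 0 ≤ F := by positivity
  have hEnonneg : 0 ≤ E := by positivity
  have hFeq : (q - 1) * F = b := mul_div_cancel₀ b hq1.ne'
  have hEeq : (q - 1) * E = a + F := mul_div_cancel₀ _ hq1.ne'
  clear_value F E
  have hgeom n : x n + E + F * n ≤ q ^ n * (x 0 + E) := by
    simpa using le_geom (u := fun n => x n + E + F * n) (by linarith) n fun k _ => by
      push_cast
      linear_combination h k - hEeq - k * hFeq
  exact ⟨x 0 + E, fun n => by linarith [hgeom n, mul_nonneg hFnonneg n.cast_nonneg]⟩

theorem mul_log_le_of_le_rpow_mul {t c s u p : ℝ} (ht : 0 < t) (hc : 0 < c) (hs : 0 < s)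
    (hu : 0 < u) (h : t ≤ c ^ (1 / s) * s ^ (1 / s) * u ^ (p / s)) :
    s * log t ≤ log c + log s + p * log u := by
  have hlog := log_le_log ht h
  rw [log_mul (by positivity) (by positivity), log_mul (by positivity) (by positivity),
    log_rpow hc, log_rpow hs, log_rpow hu] at hlog
  calc s * log t ≤ s * (1 / s * log c + 1 / s * log s + p / s * log u) := by gcongr
    _ = log c + log s + p * log u := by field_simp

theorem log_le_log_add_mul_of_le_mul_pow {y c q : ℝ} (hy : 0 < y) (hc : 0 < c) (hq : 0 < q)
    {n : ℕ} (h : y ≤ c * q ^ n) : log y ≤ log c + log q * n := by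
  calc log y ≤ log (c * q ^ n) := log_le_log hy h
    _ = log c + log q * n := by rw [log_mul hc.ne' (by positivity), log_pow, mul_comm]

theorem eq_mul_pow_add_two_of_rec {m : ℝ} {r : ℕ → ℝ} (hr0 : r 0 = m + 1)
    (hrec : ∀ n : ℕ, r (n + 1) = m / 2 * r n - m + 2) (n : ℕ) :
    r n = (m - 1) * (m / 2) ^ n + 2 := by
  induction n with
  | zero => rw [hr0]; ring
  | succ n ih => rw [hrec, ih]; ring

theorem stmt_12 (m : ℝ) (hm : 2 < m) (γ : ℝ) (hγ : γ = Real.sqrt (m / 2))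
    (C : ℝ) (hC : 0 < C)
    (r : ℕ → ℝ) (hr0 : r 0 = m + 1)
    (hrec : ∀ n : ℕ, r (n + 1) = γ ^ 2 * r n - m + 2)
    (T : ℕ → ℝ) (hT1 : ∀ n, 1 ≤ T n)
    (hT : ∀ n : ℕ, T (n + 1) ≤
      (1 + C) ^ ((1 : ℝ) / r (n + 1)) * (r (n + 1)) ^ ((1 : ℝ) / r (n + 1)) *
        T n ^ (γ ^ 2 * r n / r (n + 1))) :
    ∃ M : ℝ, ∀ n : ℕ, T n ≤ M := by
  have hγ2 : γ ^ 2 = m / 2 := by rw [hγ, sq_sqrt (by positivity)]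
  rw [hγ2] at hrec hT
  have hq : 1 < m / 2 := by linarith
  have hr := eq_mul_pow_add_two_of_rec hr0 hrec
  have hpow n : 0 < (m / 2) ^ n := by positivity
  have hrpos n : 0 < r n := by rw [hr]; nlinarith [hpow n]
  have hTpos n : 0 < T n := one_pos.trans_le (hT1 n)
  have hlogr n : log (r (n + 1)) ≤ log (m + 1) + log (m / 2) * (n + 1 : ℕ) :=
    log_le_log_add_mul_of_le_mul_pow (hrpos _) (by linarith) (by linarith) <| by
      rw [hr]; nlinarith [one_le_pow₀ (n := n + 1) hq.le]
  obtain ⟨K, hK⟩ := exists_le_mul_pow_of_le_mul_add_linear (x := fun n => r n * log (T n)) hq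
    (a := log (1 + C) + log (m + 1) + log (m / 2)) (b := log (m / 2))
    (add_nonneg (add_nonneg (log_nonneg (by linarith)) (log_nonneg (by linarith)))
      (log_nonneg hq.le))
    (log_nonneg hq.le) fun n => by
      have := mul_log_le_of_le_rpow_mul (hTpos _) (by linarith) (hrpos _) (hTpos n) (hT n)
      push_cast at hlogr
      linarith [hlogr n]
  refine ⟨exp (K / (m - 1)), fun n => ?_⟩
  have hlogT : (m - 1) * log (T n) ≤ K := by
    have hle : (m - 1) * (m / 2) ^ n * log (T n) ≤ r n * log (T n) :=
      mul_le_mul_of_nonneg_right (by rw [hr]; linarith) (log_nonneg (hT1 n))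
    nlinarith [hK n, hpow n]
  rw [← exp_log (hTpos n), exp_le_exp, le_div_iff₀ (by linarith)]
  linarith
end
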